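/- For every integer n ≥ 1, the derivative of the generalized degenerate Bernoulli polynomial satisfies d/dx β_{n,λ}^{(p)}(x) = Σ_{l=1}^{n} (-λ)^{l-1} (l-1)! C(n,l) β_{n-l,λ}^{(p)}(x). -/

import Mathlib

open Finset PowerSeries

noncomputable section

/-- The generalized (degenerate) falling factorial `(x)_{n,λ} = ∏_{j<n} (x - jλ)`. -/
def dfall (x : ℝ) (n : ℕ) (lam : ℝ) : ℝ := ∏ j ∈ Finset.range n, (x - j * lam)

/-- The degenerate exponential `e_λ^x(t) = Σ_{n≥0} (x)_{n,λ} t^n / n!` as a formal power series. -/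
def degExp (lam x : ℝ) : PowerSeries ℝ :=
  PowerSeries.mk fun n => dfall x n lam / n.factorial

/-- The degenerate Stirling numbers of the second kind, defined by
`(1/k!)(e_λ(t)-1)^k = Σ_{n≥k} S_{2,λ}(n,k) t^n/n!`. -/
def S2 (lam : ℝ) (n k : ℕ) : ℝ :=
  (n.factorial : ℝ) / (k.factorial : ℝ) * PowerSeries.coeff n ((degExp lam 1 - 1) ^ k)

/-- The degenerate Stirling polynomials of the second kind, defined by
`(1/k!)(e_λ(t)-1)^k e_λ^x(t) = Σ_{n≥k} S_{2,λ}(n,k|x) t^n/n!`. -/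
def S2p (lam : ℝ) (n k : ℕ) (x : ℝ) : ℝ :=
  (n.factorial : ℝ) / (k.factorial : ℝ) *
    PowerSeries.coeff n ((degExp lam 1 - 1) ^ k * degExp lam x)

/-- The degenerate logarithm `log_λ(1+t) = Σ_{n≥1} λ^{n-1}(1)_{n,1/λ} t^n/n!`. -/
def degLog (lam : ℝ) : PowerSeries ℝ :=
  PowerSeries.mk fun n => if n = 0 then 0 else lam ^ (n - 1) * dfall 1 n (1 / lam) / n.factorial

/-- The degenerate Stirling numbers of the first kind, defined by
`(1/k!)(log_λ(1+t))^k = Σ_{n≥k} S_{1,λ}(n,k) t^n/n!`. -/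
def S1 (lam : ℝ) (n k : ℕ) : ℝ :=
  (n.factorial : ℝ) / (k.factorial : ℝ) * PowerSeries.coeff n ((degLog lam) ^ k)

/-- Rising factorial `⟨a⟩_k = a(a+1)⋯(a+k-1)`. -/
def rising (a : ℝ) (k : ℕ) : ℝ := ∏ j ∈ Finset.range k, (a + j)

/-- The generalized degenerate Bernoulli polynomials `β_{n,λ}^{(p)}(x)`, defined by
`Σ_{n≥0} β_{n,λ}^{(p)}(x) t^n/n! = ₂F₁(1-λ,1;p+2;1-e_λ(t)) e_λ^x(t)`.
Since `1 - e_λ(t)` has zero constant term, the coefficient of `t^n` in the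
hypergeometric series only involves the terms with `k ≤ n`. -/
def genBetaPoly (lam : ℝ) (p : ℤ) (x : ℝ) (n : ℕ) : ℝ :=
  (n.factorial : ℝ) * PowerSeries.coeff n
    ((∑ k ∈ Finset.range (n + 1),
        (rising (1 - lam) k * rising 1 k / (rising ((p : ℝ) + 2) k * k.factorial)) •
          ((1 - degExp lam 1) ^ k)) * degExp lam x)

/-- The generalized degenerate Bernoulli numbers `β_{n,λ}^{(p)} = β_{n,λ}^{(p)}(0)`. -/
def genBeta (lam : ℝ) (p : ℤ) (n : ℕ) : ℝ := genBetaPoly lam p 0 n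

/-- The degenerate type Eulerian numbers, defined by
`(-1)^{n-m} A_λ(n,m) = Σ_{k=0}^{n-m} λ^k (1)_{k+1,1/λ} C(n-k,m) S_{2,λ}(n,k)`. -/
def Eul (lam : ℝ) (n m : ℕ) : ℝ :=
  (-1 : ℝ) ^ (n - m) * ∑ k ∈ Finset.range (n - m + 1),
    lam ^ k * dfall 1 (k + 1) (1 / lam) * ((n - k).choose m : ℝ) * S2 lam n k

/-!
Since the generating function of `β_{n,λ}^{(p)}(x)` is a power series in `t` alone times
`e_λ^x(t)`, the polynomials are a binomial convolution
`β_{n,λ}^{(p)}(x) = Σ_j C(n,j) β_{j,λ}^{(p)} (x)_{n-j,λ}`. The falling factorials satisfy the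
derivative formula themselves (induction on `n` via `(x)_{n+1,λ} = (x)_{n,λ} (x - nλ)`), and a
formula of the shape `q_m' = Σ_l c_l C(m,l) q_{m-l}` passes through binomial convolutions
because `C(n,j) C(n-j,l) = C(n,l) C(n-l,j)`.
-/

lemma dfall_succ (x : ℝ) (n : ℕ) (lam : ℝ) :
    dfall x (n + 1) lam = dfall x n lam * (x - n * lam) :=
  prod_range_succ _ _

lemma degExp_zero_right (lam : ℝ) : degExp lam 0 = 1 := by
  ext (_ | n)
  · simp [degExp, dfall]
  · simp [degExp, dfall, prod_range_succ']

/- After Pascal's rule, `(x)_{n-l,λ} = (x)_{n-l-1,λ} ((x - nλ) + (l+1)λ)` leaves a multiple of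
`λ` that cancels against the `C(n,l)`-terms shifted by one. -/
lemma sum_range_choose_dfall_succ (x lam : ℝ) (n : ℕ) :
    ∑ l ∈ range (n + 1),
        (-lam) ^ l * (l.factorial : ℝ) * ((n + 1).choose (l + 1) : ℝ) * dfall x (n - l) lam =
      (∑ l ∈ range n,
          (-lam) ^ l * (l.factorial : ℝ) * (n.choose (l + 1) : ℝ) * dfall x (n - (l + 1)) lam) *
        (x - n * lam) + dfall x n lam := by
  simp_rw [Nat.choose_succ_succ', Nat.cast_add, mul_add, add_mul, sum_add_distrib]
  rw [sum_range_succ', sum_range_succ]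
  simp only [Nat.choose_succ_self, Nat.cast_zero, mul_zero, zero_mul, add_zero, pow_zero,
    Nat.factorial_zero, Nat.choose_zero_right, Nat.cast_one, one_mul, Nat.sub_zero]
  rw [add_right_comm, ← sum_add_distrib, sum_mul]
  congr 1
  refine sum_congr rfl fun l hl => ?_
  obtain ⟨m, rfl⟩ := Nat.exists_eq_add_of_lt (mem_range.mp hl)
  rw [show l + m + 1 - (l + 1) = m by omega, show l + m + 1 - l = m + 1 by omega, dfall_succ,
    Nat.factorial_succ]
  push_cast
  ring

lemma sum_Icc_one_eq_sum_range {M : Type*} [AddCommMonoid M] (f : ℕ → M) (n : ℕ) :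
    ∑ l ∈ Icc 1 n, f l = ∑ l ∈ range n, f (l + 1) := by
  rw [← Ico_add_one_right_eq_Icc, sum_Ico_eq_sum_range]
  simp [add_comm]

lemma hasDerivAt_dfall (lam x : ℝ) (n : ℕ) :
    HasDerivAt (fun y => dfall y n lam)
      (∑ l ∈ Icc 1 n, (-lam) ^ (l - 1) * ((l - 1).factorial : ℝ) * (n.choose l : ℝ) *
        dfall x (n - l) lam) x := by
  simp_rw [sum_Icc_one_eq_sum_range, Nat.add_sub_cancel]
  induction n with
  | zero => simpa [dfall] using hasDerivAt_const x (1 : ℝ)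
  | succ n ih =>
    simp_rw [dfall_succ, Nat.add_sub_add_right, sum_range_choose_dfall_succ]
    have h := ih.mul ((hasDerivAt_id' x).sub_const ((n : ℝ) * lam))
    rwa [mul_one] at h

def binomConv {α R : Type*} [Semiring R] (b : ℕ → R) (q : ℕ → α → R) (n : ℕ) (y : α) :
    R :=
  ∑ j ∈ range (n + 1), (n.choose j : R) * b j * q (n - j) y

lemma choose_mul_choose_sub_comm (n j l : ℕ) :
    n.choose j * (n - j).choose l = n.choose l * (n - l).choose j := by
  have hj := Nat.choose_mul (n := n) (k := j + l) (s := j) (by omega)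
  have hl := Nat.choose_mul (n := n) (k := j + l) (s := l) (by omega)
  rw [Nat.choose_symm_add] at hj
  simp only [Nat.add_sub_cancel_left, Nat.add_sub_cancel] at hj hl
  rw [← hj, hl]

lemma hasDerivAt_binomConv {𝕜 : Type*} [NontriviallyNormedField 𝕜] {b c : ℕ → 𝕜}
    {q : ℕ → 𝕜 → 𝕜} {x : 𝕜}
    (hq : ∀ m, HasDerivAt (q m) (∑ l ∈ Icc 1 m, c l * (m.choose l : 𝕜) * q (m - l) x) x)
    (n : ℕ) :
    HasDerivAt (binomConv b q n)
      (∑ l ∈ Icc 1 n, c l * (n.choose l : 𝕜) * binomConv b q (n - l) x) x := by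
  refine (HasDerivAt.fun_sum (u := range (n + 1)) fun j _ =>
    (hq (n - j)).const_mul ((n.choose j : 𝕜) * b j)).congr_deriv ?_
  simp_rw [binomConv, mul_sum]
  rw [sum_comm' (t' := Icc 1 n) (s' := fun l => range (n - l + 1))]
  · refine sum_congr rfl fun l _ => sum_congr rfl fun j _ => ?_
    have h : (n.choose j : 𝕜) * (n - j).choose l = n.choose l * (n - l).choose j := by
      rw [← Nat.cast_mul, ← Nat.cast_mul, choose_mul_choose_sub_comm]
    rw [Nat.sub_right_comm]
    linear_combination b j * c l * q (n - l - j) x * h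
  · intro j l
    simp only [mem_range, mem_Icc]
    omega

def truncHypergeom (lam : ℝ) (p : ℤ) (n : ℕ) : PowerSeries ℝ :=
  ∑ k ∈ range (n + 1),
    (rising (1 - lam) k * rising 1 k / (rising ((p : ℝ) + 2) k * k.factorial)) •
      (1 - degExp lam 1) ^ k

lemma coeff_pow_one_sub_degExp_of_lt (lam : ℝ) {j k : ℕ} (h : j < k) :
    coeff j ((1 - degExp lam 1) ^ k) = 0 := by
  have hX : X ∣ 1 - degExp lam 1 := by
    rw [X_dvd_iff]
    simp [degExp, dfall]
  exact X_pow_dvd_iff.mp (pow_dvd_pow_of_dvd hX k) j h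

lemma coeff_truncHypergeom_of_le (lam : ℝ) (p : ℤ) {j n : ℕ} (h : j ≤ n) :
    coeff j (truncHypergeom lam p n) = coeff j (truncHypergeom lam p j) := by
  induction n, h using Nat.le_induction with
  | base => rfl
  | succ n hjn ih =>
    rw [truncHypergeom, sum_range_succ, map_add, ← truncHypergeom, ih, coeff_smul,
      coeff_pow_one_sub_degExp_of_lt lam (by omega), smul_zero, add_zero]

lemma genBeta_eq_factorial_mul_coeff (lam : ℝ) (p : ℤ) (n : ℕ) :
    genBeta lam p n = n.factorial * coeff n (truncHypergeom lam p n) := by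
  rw [genBeta, genBetaPoly, degExp_zero_right, mul_one, truncHypergeom]

lemma genBetaPoly_eq_binomConv (lam : ℝ) (p : ℤ) (x : ℝ) (n : ℕ) :
    genBetaPoly lam p x n = binomConv (genBeta lam p) (fun m y => dfall y m lam) n x := by
  rw [genBetaPoly, ← truncHypergeom, coeff_mul, Nat.sum_antidiagonal_eq_sum_range_succ_mk,
    mul_sum, binomConv]
  refine sum_congr rfl fun j hj => ?_
  have hjn : j ≤ n := Nat.lt_succ_iff.mp (mem_range.mp hj)
  rw [coeff_truncHypergeom_of_le lam p hjn, genBeta_eq_factorial_mul_coeff, Nat.cast_choose ℝ hjn]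
  simp only [degExp, coeff_mk]
  field_simp

theorem stmt13_general (lam : ℝ) (p : ℤ) (n : ℕ) (x : ℝ) :
    deriv (fun y => genBetaPoly lam p y n) x =
      ∑ l ∈ Finset.Icc 1 n,
        (-lam) ^ (l - 1) * ((l - 1).factorial : ℝ) * (n.choose l : ℝ) *
          genBetaPoly lam p x (n - l) := by
  have hβ : (fun y => genBetaPoly lam p y n) =
      binomConv (genBeta lam p) (fun m y => dfall y m lam) n :=
    funext fun y => genBetaPoly_eq_binomConv lam p y n
  rw [hβ, (hasDerivAt_binomConv (c := fun l => (-lam) ^ (l - 1) * ((l - 1).factorial : ℝ))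
    (hasDerivAt_dfall lam x) n).deriv]
  simp_rw [genBetaPoly_eq_binomConv]

theorem stmt13 (lam : ℝ) (p : ℤ) (hp : -1 ≤ p) (n : ℕ) (hn : 1 ≤ n) (x : ℝ) :
    deriv (fun y => genBetaPoly lam p y n) x =
      ∑ l ∈ Finset.Icc 1 n,
        (-lam) ^ (l - 1) * ((l - 1).factorial : ℝ) * (n.choose l : ℝ) *
          genBetaPoly lam p x (n - l) :=
  stmt13_general lam p n x
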